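/- Let S be a finite set, Δ, Θ ∈ D(S), and R ⊆ S × S. Then Δ R† Θ if and only if the maximum flow in the network N(Δ,Θ,R) is 1. -/

import Mathlib

open scoped Classical

/-- A (discrete) probability distribution over a finite set `S`. -/
structure FDist (S : Type*) [Fintype S] where
  f : S → ℝ
  nonneg : ∀ s, 0 ≤ f s
  sum_one : ∑ s, f s = 1

/-- The point distribution at `s`. -/
noncomputable def FDist.point {S : Type*} [Fintype S] (s : S) : FDist S where
  f := fun u => if u = s then 1 else 0
  nonneg := by intro u; (try simp only []); split <;> norm_num
  sum_one := by simp

/-- The lifting `R†` of a relation to distributions: the smallest relation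
relating point distributions of related states and closed under convex
combinations. -/
inductive Lift {S T : Type*} [Fintype S] [Fintype T] (R : S → T → Prop) :
    FDist S → FDist T → Prop
  | point {s : S} {t : T} :
      R s t → Lift R (FDist.point s) (FDist.point t)
  | convex (I : Finset ℕ) (p : ℕ → ℝ)
      (hp : ∀ i ∈ I, 0 ≤ p i) (hsum : ∑ i ∈ I, p i = 1)
      (Δs : ℕ → FDist S) (Θs : ℕ → FDist T)
      (h : ∀ i ∈ I, Lift R (Δs i) (Θs i))
      (Δ : FDist S) (Θ : FDist T)
      (hΔ : Δ.f = ∑ i ∈ I, p i • (Δs i).f)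
      (hΘ : Θ.f = ∑ i ∈ I, p i • (Θs i).f) :
      Lift R Δ Θ

/-- Nodes of the network `N(Δ,Θ,R)`: a copy `S` of the states (left layer),
a disjoint copy `S'` (right layer), a source `⊥` and a sink `⊤`. -/
abbrev Node (S : Type*) := (S ⊕ S) ⊕ Bool

/-- The source `⊥`. -/
def Node.src {S : Type*} : Node S := Sum.inr false

/-- The sink `⊤`. -/
def Node.snk {S : Type*} : Node S := Sum.inr true

/-- The capacity function of the network `N(Δ,Θ,R)`: `c(⊥,s) = Δ(s)`,
`c(s,t') = 1` whenever `s R t` (these are exactly the edges from the left to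
the right layer), `c(t',⊤) = Θ(t)`, and capacity `0` on all non-edges. -/
noncomputable def cap {S : Type*} [Fintype S] (Δ Θ : FDist S) (R : S → S → Prop) :
    Node S → Node S → ℝ := fun u v =>
  match u, v with
  | Sum.inr false, Sum.inl (Sum.inl s) => Δ.f s
  | Sum.inl (Sum.inl s), Sum.inl (Sum.inr t) => if R s t then 1 else 0
  | Sum.inl (Sum.inr t), Sum.inr true => Θ.f t
  | _, _ => 0

/-- A flow function for capacity `c`: it is nonnegative, bounded by the
capacities (hence zero on non-edges), and conserves flow at every node other
than the source and the sink. -/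
def IsFlow {S : Type*} [Fintype S] (c : Node S → Node S → ℝ)
    (g : Node S → Node S → ℝ) : Prop :=
  (∀ u v, 0 ≤ g u v ∧ g u v ≤ c u v) ∧
  (∀ v : Node S, v ≠ Node.src → v ≠ Node.snk → ∑ u, g u v = ∑ u, g v u)

/-- The flow value `F(g)` of a flow `g`: total flow out of the source minus
total flow into the source. -/
noncomputable def flowValue {S : Type*} [Fintype S] (g : Node S → Node S → ℝ) : ℝ :=
  ∑ v, g Node.src v - ∑ v, g v Node.src

/-- The maximum flow of the network with capacity `c`: the supremum of the
values of all flow functions. -/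
noncomputable def maxFlow {S : Type*} [Fintype S] (c : Node S → Node S → ℝ) : ℝ :=
  sSup { F | ∃ g, IsFlow c g ∧ F = flowValue g }

/-!
Both conditions are equivalent to the existence of a coupling of `Δ` and `Θ` supported on `R`:
a weight `w ≥ 0` on `S × S`, vanishing off `R`, with marginals `Δ` and `Θ`. Couplings are
closed under the convex combinations generating `R†`, and conversely a coupling exhibits `Δ R† Θ`
as the combination of the pairs `(s̄, t̄)` with weights `w s t`. On the network side, every flow
has value at most the source capacity `∑ Δ = 1`, and a coupling is the middle layer of a flow
attaining it. A flow of value `1` saturates the source edges; conservation at both middle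
layers then makes its middle layer a coupling and saturates the sink edges too. The maximum
flow is attained because the flows form a compact set.
-/

section Coupling

variable {S T : Type*} [Fintype S] [Fintype T] {R : S → T → Prop}

structure IsCoupling (R : S → T → Prop) (Δ : FDist S) (Θ : FDist T) (w : S → T → ℝ) :
    Prop where
  nonneg : ∀ s t, 0 ≤ w s t
  rel_of_ne_zero : ∀ s t, w s t ≠ 0 → R s t
  sum_left : ∀ s, ∑ t, w s t = Δ.f s
  sum_right : ∀ t, ∑ s, w s t = Θ.f t

lemma IsCoupling.point {s : S} {t : T} (h : R s t) :
    IsCoupling R (FDist.point s) (FDist.point t)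
      fun a b => (FDist.point s).f a * (FDist.point t).f b where
  nonneg a b := mul_nonneg ((FDist.point s).nonneg a) ((FDist.point t).nonneg b)
  rel_of_ne_zero a b hab := by
    obtain ⟨rfl, rfl⟩ : b = t ∧ a = s := by simpa [FDist.point] using hab
    exact h
  sum_left a := by rw [← Finset.mul_sum, FDist.sum_one, mul_one]
  sum_right b := by rw [← Finset.sum_mul, FDist.sum_one, one_mul]

lemma IsCoupling.sum {ι : Type*} (I : Finset ι) {p : ι → ℝ} (hp : ∀ i ∈ I, 0 ≤ p i)
    {Δs : ι → FDist S} {Θs : ι → FDist T} {w : ι → S → T → ℝ}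
    (hw : ∀ i ∈ I, IsCoupling R (Δs i) (Θs i) (w i)) {Δ : FDist S} {Θ : FDist T}
    (hΔ : Δ.f = ∑ i ∈ I, p i • (Δs i).f) (hΘ : Θ.f = ∑ i ∈ I, p i • (Θs i).f) :
    IsCoupling R Δ Θ (∑ i ∈ I, p i • w i) where
  nonneg s t := by
    simp only [Finset.sum_apply, Pi.smul_apply, smul_eq_mul]
    exact Finset.sum_nonneg fun i hi => mul_nonneg (hp i hi) ((hw i hi).nonneg s t)
  rel_of_ne_zero s t hst := by
    simp only [Finset.sum_apply, Pi.smul_apply, smul_eq_mul] at hst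
    obtain ⟨i, hi, hne⟩ := Finset.exists_ne_zero_of_sum_ne_zero hst
    exact (hw i hi).rel_of_ne_zero s t (right_ne_zero_of_mul hne)
  sum_left s := by
    simp only [hΔ, Finset.sum_apply, Pi.smul_apply, smul_eq_mul]
    rw [Finset.sum_comm]
    exact Finset.sum_congr rfl fun i hi => by rw [← Finset.mul_sum, (hw i hi).sum_left]
  sum_right t := by
    simp only [hΘ, Finset.sum_apply, Pi.smul_apply, smul_eq_mul]
    rw [Finset.sum_comm]
    exact Finset.sum_congr rfl fun i hi => by rw [← Finset.mul_sum, (hw i hi).sum_right]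

lemma Lift.exists_isCoupling {Δ : FDist S} {Θ : FDist T} (h : Lift R Δ Θ) :
    ∃ w, IsCoupling R Δ Θ w := by
  induction h with
  | point hst => exact ⟨_, .point hst⟩
  | convex I p hp _ Δs Θs _ Δ Θ hΔ hΘ ih =>
    choose! w hw using ih
    exact ⟨_, .sum I hp hw hΔ hΘ⟩

lemma Lift.convex_of_countable {ι : Type*} [Countable ι] (I : Finset ι) (p : ι → ℝ)
    (hp : ∀ i ∈ I, 0 ≤ p i) (hsum : ∑ i ∈ I, p i = 1) (Δs : ι → FDist S) (Θs : ι → FDist T)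
    (h : ∀ i ∈ I, Lift R (Δs i) (Θs i)) {Δ : FDist S} {Θ : FDist T}
    (hΔ : Δ.f = ∑ i ∈ I, p i • (Δs i).f) (hΘ : Θ.f = ∑ i ∈ I, p i • (Θs i).f) :
    Lift R Δ Θ := by
  obtain ⟨e, he⟩ := Countable.exists_injective_nat ι
  let e' : ι ↪ ℕ := ⟨e, he⟩
  refine Lift.convex (I.map e') (Function.extend e p 0) ?_ ?_
    (Function.extend e Δs fun _ => Δ) (Function.extend e Θs fun _ => Θ) ?_ Δ Θ ?_ ?_ <;>
    simp only [Finset.forall_mem_map, Finset.sum_map] <;>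
    simpa [e', he.extend_apply]

lemma IsCoupling.lift {Δ : FDist S} {Θ : FDist T} {w : S → T → ℝ}
    (hw : IsCoupling R Δ Θ w) : Lift R Δ Θ := by
  refine Lift.convex_of_countable {q : S × T | w q.1 q.2 ≠ 0} (fun q => w q.1 q.2)
    (fun q _ => hw.nonneg _ _) ?_ (fun q => FDist.point q.1) (fun q => FDist.point q.2)
    (fun q hq => .point (hw.rel_of_ne_zero _ _ (Finset.mem_filter.1 hq).2)) ?_ ?_
  · rw [Finset.sum_filter_ne_zero, Fintype.sum_prod_type]
    simp [hw.sum_left, Δ.sum_one]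
  · ext a
    simp only [Finset.sum_apply, Pi.smul_apply, smul_eq_mul]
    rw [Finset.sum_filter_of_ne fun q _ hq => left_ne_zero_of_mul hq]
    simp [Fintype.sum_prod_type, FDist.point, hw.sum_left]
  · ext b
    simp only [Finset.sum_apply, Pi.smul_apply, smul_eq_mul]
    rw [Finset.sum_filter_of_ne fun q _ hq => left_ne_zero_of_mul hq]
    simp [Fintype.sum_prod_type_right, FDist.point, hw.sum_right]

end Coupling

section Flow

variable {S : Type*} [Fintype S] {c g : Node S → Node S → ℝ}

lemma IsFlow.apply_eq_zero (hg : IsFlow c g) {u v : Node S} (h : c u v = 0) : g u v = 0 :=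
  le_antisymm (h ▸ (hg.1 u v).2) (hg.1 u v).1

lemma isCompact_setOf_isFlow (c : Node S → Node S → ℝ) : IsCompact {g | IsFlow c g} := by
  have hcont (u v : Node S) : Continuous fun g : Node S → Node S → ℝ => g u v := by fun_prop
  refine (isCompact_Icc (a := 0) (b := c)).of_isClosed_subset ?_
    fun g hg => ⟨fun u v => (hg.1 u v).1, fun u v => (hg.1 u v).2⟩
  simp only [IsFlow, Set.ofPred_and, Set.ofPred_forall]
  exact (isClosed_iInter fun u => isClosed_iInter fun v =>
      (isClosed_le continuous_const (hcont u v)).inter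
        (isClosed_le (hcont u v) continuous_const)).inter
    (isClosed_iInter fun v => isClosed_iInter fun _ => isClosed_iInter fun _ =>
      isClosed_eq (continuous_finsetSum _ fun u _ => hcont u v)
        (continuous_finsetSum _ fun u _ => hcont v u))

lemma continuous_flowValue : Continuous (flowValue (S := S)) := by
  unfold flowValue; fun_prop

lemma exists_isFlow_flowValue_eq_maxFlow (hc : 0 ≤ c) :
    ∃ g, IsFlow c g ∧ flowValue g = maxFlow c := by
  have hzero : IsFlow c 0 := ⟨fun u v => ⟨le_rfl, hc u v⟩, by simp⟩
  have hvalues : {F | ∃ g, IsFlow c g ∧ F = flowValue g} = flowValue '' {g | IsFlow c g} := by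
    ext F; simp [eq_comm]
  have := ((isCompact_setOf_isFlow c).image continuous_flowValue).sSup_mem ⟨_, 0, hzero, rfl⟩
  rwa [maxFlow, hvalues]

lemma maxFlow_eq_flowValue (hg : IsFlow c g)
    (hmax : ∀ g', IsFlow c g' → flowValue g' ≤ flowValue g) : maxFlow c = flowValue g :=
  IsGreatest.csSup_eq ⟨⟨g, hg, rfl⟩, by rintro _ ⟨g', hg', rfl⟩; exact hmax g' hg'⟩

end Flow

section Network

variable {S : Type*} [Fintype S] {Δ Θ : FDist S} {R : S → S → Prop}

lemma FDist.f_le_one (Δ : FDist S) (s : S) : Δ.f s ≤ 1 :=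
  Δ.sum_one ▸ Finset.single_le_sum (fun t _ => Δ.nonneg t) (Finset.mem_univ s)

def layerFlow (a : S → ℝ) (w : S → S → ℝ) (b : S → ℝ) : Node S → Node S → ℝ := fun u v =>
  match u, v with
  | Sum.inr false, Sum.inl (Sum.inl s) => a s
  | Sum.inl (Sum.inl s), Sum.inl (Sum.inr t) => w s t
  | Sum.inl (Sum.inr t), Sum.inr true => b t
  | _, _ => 0

lemma cap_nonneg (Δ Θ : FDist S) (R : S → S → Prop) : 0 ≤ cap Δ Θ R := by
  rintro (⟨s | t⟩ | (_ | _)) (⟨s' | t'⟩ | (_ | _)) <;>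
    simp [cap, Δ.nonneg, Θ.nonneg, apply_ite]

lemma flowValue_layerFlow (a : S → ℝ) (w : S → S → ℝ) (b : S → ℝ) :
    flowValue (layerFlow a w b) = ∑ s, a s := by
  simp [flowValue, layerFlow, Node.src, Fintype.sum_sum_type]

lemma IsFlow.eq_layerFlow {g : Node S → Node S → ℝ} (hg : IsFlow (cap Δ Θ R) g) :
    g = layerFlow (fun s => g Node.src (Sum.inl (Sum.inl s)))
      (fun s t => g (Sum.inl (Sum.inl s)) (Sum.inl (Sum.inr t)))
      (fun t => g (Sum.inl (Sum.inr t)) Node.snk) := by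
  ext (⟨s | t⟩ | (_ | _)) (⟨s' | t'⟩ | (_ | _)) <;> first | rfl | exact hg.apply_eq_zero rfl

lemma isFlow_cap_layerFlow_iff {a : S → ℝ} {w : S → S → ℝ} {b : S → ℝ} :
    IsFlow (cap Δ Θ R) (layerFlow a w b) ↔
      (∀ s, 0 ≤ a s ∧ a s ≤ Δ.f s) ∧ (∀ s t, 0 ≤ w s t ∧ w s t ≤ if R s t then 1 else 0) ∧
      (∀ t, 0 ≤ b t ∧ b t ≤ Θ.f t) ∧ (∀ s, ∑ t, w s t = a s) ∧ (∀ t, ∑ s, w s t = b t) := by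
  have bounds : (∀ u v, 0 ≤ layerFlow a w b u v ∧ layerFlow a w b u v ≤ cap Δ Θ R u v) ↔
      (∀ s, 0 ≤ a s ∧ a s ≤ Δ.f s) ∧ (∀ s t, 0 ≤ w s t ∧ w s t ≤ if R s t then 1 else 0) ∧
      (∀ t, 0 ≤ b t ∧ b t ≤ Θ.f t) := by
    refine ⟨fun h => ⟨fun s => h Node.src (Sum.inl (Sum.inl s)),
      fun s t => h (Sum.inl (Sum.inl s)) (Sum.inl (Sum.inr t)),
      fun t => h (Sum.inl (Sum.inr t)) Node.snk⟩, ?_⟩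
    rintro ⟨ha, hw, hb⟩ (⟨s | t⟩ | (_ | _)) (⟨s' | t'⟩ | (_ | _)) <;>
      first | exact ha _ | exact hw _ _ | exact hb _ | simp [layerFlow, cap]
  have conservation : (∀ v, v ≠ Node.src → v ≠ Node.snk →
      ∑ u, layerFlow a w b u v = ∑ u, layerFlow a w b v u) ↔
      (∀ s, ∑ t, w s t = a s) ∧ (∀ t, ∑ s, w s t = b t) := by
    refine ⟨fun h => ⟨fun s => ?_, fun t => ?_⟩, ?_⟩
    · simpa [layerFlow, Fintype.sum_sum_type, Node.src, Node.snk, eq_comm]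
        using h (Sum.inl (Sum.inl s))
    · simpa [layerFlow, Fintype.sum_sum_type, Node.src, Node.snk]
        using h (Sum.inl (Sum.inr t))
    · rintro ⟨hl, hr⟩ (⟨s | t⟩ | (_ | _)) hsrc hsnk <;>
        simp_all [layerFlow, Fintype.sum_sum_type, Node.src, Node.snk]
  rw [IsFlow, bounds, conservation]
  simp only [and_assoc]

lemma IsCoupling.isFlow_layerFlow {w : S → S → ℝ} (hw : IsCoupling R Δ Θ w) :
    IsFlow (cap Δ Θ R) (layerFlow Δ.f w Θ.f) := by
  refine isFlow_cap_layerFlow_iff.2 ⟨fun s => ⟨Δ.nonneg s, le_rfl⟩, fun s t => ⟨hw.nonneg s t, ?_⟩,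
    fun t => ⟨Θ.nonneg t, le_rfl⟩, hw.sum_left, hw.sum_right⟩
  split_ifs with hst
  · calc w s t ≤ ∑ t', w s t' :=
          Finset.single_le_sum (fun t' _ => hw.nonneg s t') (Finset.mem_univ t)
      _ = Δ.f s := hw.sum_left s
      _ ≤ 1 := Δ.f_le_one s
  · exact (not_imp_comm.1 (hw.rel_of_ne_zero s t) hst).le

lemma IsFlow.flowValue_eq_sum {g : Node S → Node S → ℝ} (hg : IsFlow (cap Δ Θ R) g) :
    flowValue g = ∑ s, g Node.src (Sum.inl (Sum.inl s)) :=
  (congrArg flowValue hg.eq_layerFlow).trans (flowValue_layerFlow _ _ _)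

lemma IsFlow.flowValue_le_one {g : Node S → Node S → ℝ} (hg : IsFlow (cap Δ Θ R) g) :
    flowValue g ≤ 1 := by
  rw [hg.flowValue_eq_sum, ← Δ.sum_one]
  exact Finset.sum_le_sum fun s _ => (hg.1 _ _).2

lemma IsFlow.isCoupling {g : Node S → Node S → ℝ} (hg : IsFlow (cap Δ Θ R) g)
    (hval : flowValue g = 1) :
    IsCoupling R Δ Θ fun s t => g (Sum.inl (Sum.inl s)) (Sum.inl (Sum.inr t)) := by
  obtain ⟨ha, hw, hb, hl, hr⟩ := isFlow_cap_layerFlow_iff.1 (hg.eq_layerFlow ▸ hg)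
  have hsrc : ∀ s, g Node.src (Sum.inl (Sum.inl s)) = Δ.f s := by
    refine fun s => (Finset.sum_eq_sum_iff_of_le fun s _ => (ha s).2).1 ?_ s (Finset.mem_univ s)
    rw [← hg.flowValue_eq_sum, hval, Δ.sum_one]
  have hsnk : ∀ t, g (Sum.inl (Sum.inr t)) Node.snk = Θ.f t := by
    refine fun t => (Finset.sum_eq_sum_iff_of_le fun t _ => (hb t).2).1 ?_ t (Finset.mem_univ t)
    simp only [← hr, Finset.sum_comm (γ := S), hl, hsrc, Δ.sum_one, Θ.sum_one]
  refine ⟨fun s t => (hw s t).1, fun s t hst => ?_, fun s => (hl s).trans (hsrc s),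
    fun t => (hr t).trans (hsnk t)⟩
  by_contra hR
  exact hst (le_antisymm (by simpa [hR] using (hw s t).2) (hw s t).1)

end Network

/-- `Δ R† Θ` iff the maximum flow in the network `N(Δ,Θ,R)` is `1`. -/
theorem lift_iff_maxFlow_one {S : Type*} [Fintype S]
    (Δ Θ : FDist S) (R : S → S → Prop) :
    Lift R Δ Θ ↔ maxFlow (cap Δ Θ R) = 1 := by
  constructor
  · intro h
    obtain ⟨w, hw⟩ := h.exists_isCoupling
    have hval : flowValue (layerFlow Δ.f w Θ.f) = 1 := by rw [flowValue_layerFlow, Δ.sum_one]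
    rw [maxFlow_eq_flowValue hw.isFlow_layerFlow fun g hg => hval ▸ hg.flowValue_le_one, hval]
  · intro h
    obtain ⟨g, hg, hval⟩ := exists_isFlow_flowValue_eq_maxFlow (cap_nonneg Δ Θ R)
    exact (hg.isCoupling (hval.trans h)).lift
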